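/- arXiv:2110.15837 — 7 statements merged into one kernel-verified Lean document; each statement's English description precedes it below -/
import Mathlib

section
/- Let γ be a self-conjugate partition corresponding (via the diagonal-hook bijection) to a partition λ = (λ₁,…,λ_k) into distinct odd parts. If λ_i − λ_{i+1} ≥ 2(t+1) for some 1 ≤ i < k, then γ is not t-core, i.e., γ has a hook length divisible by t (in fact, a hook of length exactly t). -/
/-- Hook length of the (0-indexed) cell `(i, j)` of a Young diagram. -/
def hookLen (γ : YoungDiagram) (i j : ℕ) : ℕ :=
  γ.rowLen i + γ.colLen j - i - j - 1

/-- A partition (Young diagram) is `t`-core if no hook length is divisible by `t`. -/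
def IsTCore (γ : YoungDiagram) (t : ℕ) : Prop :=
  ∀ c ∈ γ.cells, ¬ t ∣ hookLen γ c.1 c.2

/-- The side length of the Durfee square: the number of diagonal cells. -/
def durfee (γ : YoungDiagram) : ℕ :=
  (γ.cells.filter fun c => c.1 = c.2).card

lemma diag_mem (γ : YoungDiagram) {i : ℕ} (h : i < durfee γ) : (i, i) ∈ γ := by
  by_contra hmem
  have hsub : (γ.cells.filter fun c => c.1 = c.2) ⊆ (Finset.range i).image (fun j => (j, j)) := by
    intro c hc
    simp only [Finset.mem_filter, YoungDiagram.mem_cells] at hc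
    obtain ⟨hcγ, hdiag⟩ := hc
    have hlt : c.1 < i := by
      by_contra hle
      push_neg at hle
      exact hmem (γ.up_left_mem hle (hdiag ▸ hle) (by simpa using hcγ))
    simp only [Finset.mem_image, Finset.mem_range]
    exact ⟨c.1, hlt, by simp [Prod.ext_iff, hdiag]⟩
  have := Finset.card_le_card hsub
  have h2 := Finset.card_image_le (s := Finset.range i) (f := fun j => (j, j))
  simp only [Finset.card_range] at h2
  unfold durfee at h
  omega

theorem stmt1 (γ : YoungDiagram) (hsc : γ.transpose = γ) (k : ℕ) (hk : k = durfee γ)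
    (lam : ℕ → ℕ) (hlam : ∀ i < k, lam i = hookLen γ i i)
    (t : ℕ) (ht : 1 ≤ t) (i : ℕ) (hi : i + 1 < k)
    (hgap : lam i - lam (i + 1) ≥ 2 * (t + 1)) :
    ¬ IsTCore γ t ∧ ∃ c ∈ γ.cells, hookLen γ c.1 c.2 = t := by
  have hcr : ∀ j, γ.colLen j = γ.rowLen j := by
    intro j
    rw [← γ.colLen_transpose j, hsc]
  have hii : (i, i) ∈ γ := diag_mem γ (by omega)
  have hi1 : (i + 1, i + 1) ∈ γ := diag_mem γ (by omega)
  rw [YoungDiagram.mem_iff_lt_rowLen] at hii hi1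
  have hl1 : lam i = hookLen γ i i := hlam i (by omega)
  have hl2 : lam (i+1) = hookLen γ (i+1) (i+1) := hlam (i+1) (by omega)
  unfold hookLen at hl1 hl2
  rw [hcr] at hl1 hl2
  -- row length gap
  have hr : γ.rowLen i ≥ γ.rowLen (i+1) + t := by omega
  set j := γ.rowLen i - t with hj
  have hjlt : j < γ.rowLen i := by omega
  have hmem : (i, j) ∈ γ := YoungDiagram.mem_iff_lt_rowLen.mpr hjlt
  have hc1 : i < γ.colLen j := YoungDiagram.mem_iff_lt_colLen.mp hmem
  have hc2 : ¬ (i + 1 < γ.colLen j) := by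
    intro h
    have : (i + 1, j) ∈ γ := YoungDiagram.mem_iff_lt_colLen.mpr h
    rw [YoungDiagram.mem_iff_lt_rowLen] at this
    omega
  have hcol : γ.colLen j = i + 1 := by omega
  have hhook : hookLen γ i j = t := by
    unfold hookLen
    rw [hcol]
    omega
  refine ⟨fun hcore => ?_, ⟨(i, j), (γ.mem_cells _).mpr hmem, hhook⟩⟩
  exact hcore (i, j) ((γ.mem_cells _).mpr hmem) (hhook ▸ dvd_refl t)
end

section
/- Let γ be a self-conjugate partition corresponding to the partition λ = (λ₁,…,λ_k) into distinct odd parts. For any box (i,j) in the Young diagram of γ with j ≤ k < i (below the Durfee square), the hook length satisfies h_γ(i,j) = (λ_j + 1)/2 + j − i − 1 + #{m : j ≤ m ≤ k and λ_m ≥ 2i − 2m + 1}. -/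
/-!
Since `γ` is self-conjugate, every column length equals the corresponding row length `r m`,
so `h(i, j) = r i + r j - i - j - 1` and `λ_m = 2 r m - 2 m - 1` for `m < k`. Hence, for
`m ≤ i`, the condition `λ_m ≥ 2i - 2m + 1` says `i < r m`, i.e. that `(i, m)` is a cell.
Below the Durfee square the row `i` has length `r i ≤ k`, so the counted indices are exactly
`j ≤ m < r i`, and both sides equal `r i + r j - i - j - 1`.
-/

theorem Finset.mem_iff_lt_card_of_isLowerSet {s : Finset ℕ} (hs : IsLowerSet (s : Set ℕ))
    {m : ℕ} : m ∈ s ↔ m < s.card := by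
  obtain h | ⟨a, ha⟩ := hs.eq_univ_or_Iio
  · exact absurd (h ▸ s.finite_toSet) Set.infinite_univ
  · obtain rfl : s = Finset.range a := Finset.coe_injective (by simpa using ha)
    simp

namespace YoungDiagram

theorem colLen_eq_rowLen_of_transpose_eq {γ : YoungDiagram} (hsc : γ.transpose = γ) (m : ℕ) :
    γ.colLen m = γ.rowLen m := by
  conv_lhs => rw [← hsc]
  exact γ.colLen_transpose m

theorem mk_mem_iff_lt_durfee (γ : YoungDiagram) (m : ℕ) : (m, m) ∈ γ ↔ m < durfee γ := by
  set diag := (γ.cells.filter fun c => c.1 = c.2).image Prod.fst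
  have mem_diag : ∀ n, n ∈ diag ↔ (n, n) ∈ γ := fun n => by
    simp only [diag, Finset.mem_image, Finset.mem_filter, mem_cells]
    constructor
    · rintro ⟨⟨a, b⟩, ⟨hab, rfl : a = b⟩, rfl⟩
      exact hab
    · exact fun h => ⟨(n, n), ⟨h, rfl⟩, rfl⟩
  have card_diag : diag.card = durfee γ :=
    Finset.card_image_of_injOn fun c hc d hd h => by
      simp only [Finset.coe_filter, Set.mem_ofPred_eq] at hc hd
      exact Prod.ext h (by rw [← hc.2, ← hd.2, h])
  have lower : IsLowerSet (diag : Set ℕ) := fun a b hba ha => by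
    rw [Finset.mem_coe, mem_diag] at ha ⊢
    exact γ.up_left_mem hba hba ha
  rw [← mem_diag, Finset.mem_iff_lt_card_of_isLowerSet lower, card_diag]

theorem rowLen_le_durfee {γ : YoungDiagram} {i : ℕ} (hi : durfee γ ≤ i) :
    γ.rowLen i ≤ durfee γ := by
  by_contra! h
  have : (durfee γ, durfee γ) ∈ γ := γ.up_left_mem hi le_rfl (mem_iff_lt_rowLen.mpr h)
  exact lt_irrefl _ ((γ.mk_mem_iff_lt_durfee _).mp this)

theorem hookLen_eq_of_transpose_eq {γ : YoungDiagram} (hsc : γ.transpose = γ) (i j : ℕ) :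
    hookLen γ i j = γ.rowLen i + γ.rowLen j - i - j - 1 := by
  rw [hookLen, colLen_eq_rowLen_of_transpose_eq hsc]

theorem mk_mem_iff_le_hookLen_diag {γ : YoungDiagram} (hsc : γ.transpose = γ) {i m : ℕ}
    (hm : m < durfee γ) (hmi : m ≤ i) :
    (i, m) ∈ γ ↔ 2 * i - 2 * m + 1 ≤ hookLen γ m m := by
  have hdiag : m < γ.rowLen m := mem_iff_lt_rowLen.mp ((γ.mk_mem_iff_lt_durfee m).mpr hm)
  rw [mem_iff_lt_colLen, colLen_eq_rowLen_of_transpose_eq hsc, hookLen_eq_of_transpose_eq hsc]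
  omega

theorem filter_mk_mem_Ico_eq {γ : YoungDiagram} {i j k : ℕ} (hi : γ.rowLen i ≤ k) :
    (Finset.Ico j k).filter (fun m => (i, m) ∈ γ) = Finset.Ico j (γ.rowLen i) := by
  ext m
  simp only [Finset.mem_filter, Finset.mem_Ico, mem_iff_lt_rowLen]
  omega

end YoungDiagram

theorem stmt3 (γ : YoungDiagram) (hsc : γ.transpose = γ) (k : ℕ) (hk : k = durfee γ)
    (lam : ℕ → ℕ) (hlam : ∀ i < k, lam i = hookLen γ i i)
    (i j : ℕ) (hjk : j < k) (hki : k ≤ i) (hcell : (i, j) ∈ γ.cells) :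
    (hookLen γ i j : ℤ) = (((lam j + 1) / 2 : ℕ) : ℤ) + j - i - 1 +
      ((Finset.Ico j k).filter fun m => lam m ≥ 2 * i - 2 * m + 1).card := by
  subst hk
  rw [YoungDiagram.mem_cells] at hcell
  have counted : ((Finset.Ico j (durfee γ)).filter fun m => lam m ≥ 2 * i - 2 * m + 1) =
      Finset.Ico j (γ.rowLen i) := by
    rw [← YoungDiagram.filter_mk_mem_Ico_eq (YoungDiagram.rowLen_le_durfee hki)]
    refine Finset.filter_congr fun m hm => ?_
    have hmk := (Finset.mem_Ico.mp hm).2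
    rw [hlam m hmk, YoungDiagram.mk_mem_iff_le_hookLen_diag hsc hmk (hmk.le.trans hki)]
  have hj : j < γ.rowLen i := YoungDiagram.mem_iff_lt_rowLen.mp hcell
  have hi : i < γ.rowLen j := by
    rwa [← YoungDiagram.colLen_eq_rowLen_of_transpose_eq hsc, ← YoungDiagram.mem_iff_lt_colLen]
  rw [counted, Nat.card_Ico, hlam j hjk, YoungDiagram.hookLen_eq_of_transpose_eq hsc,
    YoungDiagram.hookLen_eq_of_transpose_eq hsc]
  omega
end

section
/- Let γ be a self-conjugate partition with corresponding partition λ = (λ₁,…,λ_k) into distinct odd parts. Then γ is t-core if and only if (λ_i + λ_j)/2 ≢ 0 (mod t) for all 1 ≤ j ≤ i ≤ k, and (λ_j+1)/2 + j − i − 1 + #{j ≤ m ≤ k : λ_m ≥ 2i − 2m + 1} ≢ 0 (mod t) for all pairs (i,j) with 1 ≤ j ≤ k < i ≤ (λ₁+1)/2 and λ_j ≥ 2i − 2j + 1. -/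
theorem stmt5 (γ : YoungDiagram) (hsc : γ.transpose = γ) (k : ℕ) (hk : k = durfee γ)
    (lam : ℕ → ℕ) (hlam : ∀ i < k, lam i = hookLen γ i i) (t : ℕ) (ht : 1 ≤ t) :
    IsTCore γ t ↔
      ((∀ i j : ℕ, j ≤ i → i < k → ¬ t ∣ (lam i + lam j) / 2) ∧
       (∀ i j : ℕ, j < k → k ≤ i → i < (lam 0 + 1) / 2 → lam j ≥ 2 * i - 2 * j + 1 →
        ¬ (t : ℤ) ∣ ((((lam j + 1) / 2 : ℕ) : ℤ) + j - i - 1 +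
          ((Finset.Ico j k).filter fun m => lam m ≥ 2 * i - 2 * m + 1).card))) := by
  -- self-conjugacy: colLen = rowLen
  have hcol : ∀ j, γ.colLen j = γ.rowLen j := by
    intro j
    rw [← YoungDiagram.rowLen_transpose, hsc]
  have hmem : ∀ i j : ℕ, (i, j) ∈ γ ↔ j < γ.rowLen i := fun i j =>
    YoungDiagram.mem_iff_lt_rowLen
  have hcross : ∀ i j : ℕ, (i, j) ∈ γ ↔ i < γ.rowLen j := by
    intro i j
    rw [YoungDiagram.mem_iff_lt_colLen, hcol]
  -- diagonal membership iff < k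
  have hdiag : ∀ i : ℕ, (i, i) ∈ γ ↔ i < k := by
    have hinj : Set.InjOn Prod.fst ((γ.cells.filter fun c => c.1 = c.2) : Set (ℕ × ℕ)) := by
      intro a ha b hb hab
      simp only [Finset.coe_filter, Set.mem_setOf_eq] at ha hb
      exact Prod.ext hab (by rw [← ha.2, ← hb.2, hab])
    set T : Finset ℕ := (γ.cells.filter fun c => c.1 = c.2).image Prod.fst with hT
    have hcardT : T.card = k := by
      rw [hT, Finset.card_image_of_injOn hinj, hk, durfee]
    have hmemT : ∀ i : ℕ, i ∈ T ↔ (i, i) ∈ γ := by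
      intro i
      rw [hT]
      simp only [Finset.mem_image, Finset.mem_filter, YoungDiagram.mem_cells]
      constructor
      · rintro ⟨⟨a, b⟩, ⟨hab, h2⟩, rfl⟩
        simp only at h2
        subst h2; exact hab
      · intro h; exact ⟨(i, i), ⟨h, rfl⟩, rfl⟩
    have hlow : ∀ i i' : ℕ, i' ≤ i → i ∈ T → i' ∈ T := by
      intro i i' hle hi
      rw [hmemT] at *
      exact γ.up_left_mem hle hle hi
    intro i
    rw [← hmemT, ← hcardT]
    constructor
    · intro hi
      have : Finset.range (i + 1) ⊆ T := by
        intro m hm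
        exact hlow i m (by simpa using Nat.lt_succ_iff.mp (Finset.mem_range.mp hm)) hi
      have := Finset.card_le_card this
      simpa using this
    · intro hi
      by_contra hnot
      have hsub : T ⊆ Finset.range i := by
        intro m hm
        rw [Finset.mem_range]
        by_contra hmi
        exact hnot (hlow m i (by omega) hm)
      have := Finset.card_le_card hsub
      simp at this
      omega
  have hrowk : ∀ i < k, i < γ.rowLen i := by
    intro i hi
    rw [← hmem]
    exact (hdiag i).mpr hi
  have hrow_le : ∀ i, k ≤ i → γ.rowLen i ≤ k := by
    intro i hi
    by_contra h
    push_neg at h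
    have : (i, k) ∈ γ := (hmem i k).mpr h
    have : (k, k) ∈ γ := γ.up_left_mem hi le_rfl this
    rw [hdiag] at this
    omega
  have hlam2 : ∀ i < k, lam i + 1 = 2 * (γ.rowLen i - i) := by
    intro i hi
    have h1 := hrowk i hi
    rw [hlam i hi, hookLen, hcol]
    omega
  -- hook lengths inside the Durfee square
  have hsq : ∀ i j : ℕ, i < k → j < k → hookLen γ i j = (lam i + lam j) / 2 := by
    intro i j hi hj
    have h1 := hrowk i hi
    have h2 := hrowk j hj
    have h3 := hlam2 i hi
    have h4 := hlam2 j hj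
    rw [hookLen, hcol]
    omega
  -- the key fact for cells outside the Durfee square
  have key : ∀ i j : ℕ, j < k → k ≤ i → (i, j) ∈ γ →
      ((((lam j + 1) / 2 : ℕ) : ℤ) + j - i - 1 +
        ((Finset.Ico j k).filter fun m => lam m ≥ 2 * i - 2 * m + 1).card)
        = (hookLen γ i j : ℤ) := by
    intro i j hj hi hijmem
    have hb : i < γ.rowLen j := (hcross i j).mp hijmem
    have ha : j < γ.rowLen i := (hmem i j).mp hijmem
    have hak : γ.rowLen i ≤ k := hrow_le i hi
    have h4 := hlam2 j hj
    have hfil : ((Finset.Ico j k).filter fun m => lam m ≥ 2 * i - 2 * m + 1)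
        = Finset.Ico j (γ.rowLen i) := by
      ext m
      simp only [Finset.mem_filter, Finset.mem_Ico]
      constructor
      · rintro ⟨⟨hjm, hmk⟩, hlm⟩
        refine ⟨hjm, ?_⟩
        have h5 := hlam2 m hmk
        have : i < γ.rowLen m := by omega
        rw [← hcross, hmem] at this
        exact this
      · rintro ⟨hjm, hmr⟩
        have hmk : m < k := lt_of_lt_of_le hmr hak
        have h5 := hlam2 m hmk
        have : (i, m) ∈ γ := (hmem i m).mpr hmr
        rw [hcross] at this
        exact ⟨⟨hjm, hmk⟩, by omega⟩
    rw [hfil, Nat.card_Ico, hookLen, hcol]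
    have hd : (lam j + 1) / 2 = γ.rowLen j - j := by omega
    rw [hd]
    have e1 : γ.rowLen i + γ.rowLen j - i - j - 1
        = (γ.rowLen j - j) + (γ.rowLen i - j) - (i - j) - 1 := by omega
    rw [e1]
    push_cast [Nat.cast_sub (le_of_lt hb), Nat.cast_sub ha.le]
    have : (j : ℤ) ≤ i := by exact_mod_cast hj.le.trans hi
    have hb' : (i : ℤ) < γ.rowLen j := by exact_mod_cast hb
    have ha' : (j : ℤ) < γ.rowLen i := by exact_mod_cast ha
    omega
  -- membership of outside cells in terms of lam
  have hout : ∀ i j : ℕ, j < k → k ≤ i → ((i, j) ∈ γ ↔ lam j ≥ 2 * i - 2 * j + 1) := by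
    intro i j hj hi
    have h4 := hlam2 j hj
    rw [hcross]
    constructor
    · intro h; omega
    · intro h; omega
  constructor
  · rintro h
    constructor
    · intro i j hji hik
      have hmemij : (i, j) ∈ γ := by
        have := (hdiag i).mpr hik
        exact γ.up_left_mem le_rfl hji this
      have := h (i, j) ((YoungDiagram.mem_cells _).mpr hmemij)
      rwa [hsq i j hik (lt_of_le_of_lt hji hik)] at this
    · intro i j hj hi hi0 hgeq
      have hmemij : (i, j) ∈ γ := (hout i j hj hi).mpr hgeq
      have hdvd := h (i, j) ((YoungDiagram.mem_cells _).mpr hmemij)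
      rw [key i j hj hi hmemij]
      exact fun hc => hdvd (by exact_mod_cast hc)
  · rintro ⟨h1, h2⟩
    intro c hc
    obtain ⟨i, j⟩ := c
    rw [YoungDiagram.mem_cells] at hc
    have hk0 : 0 < k := by
      rw [← hdiag]
      exact γ.up_left_mem (Nat.zero_le _) (Nat.zero_le _) hc
    -- an auxiliary handler for the outside case
    have houtside : ∀ i j : ℕ, j < k → k ≤ i → (i, j) ∈ γ → ¬ t ∣ hookLen γ i j := by
      intro i j hj hi hmemij
      have hi0 : i < (lam 0 + 1) / 2 := by
        have h4 := hlam2 0 hk0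
        have : (i, 0) ∈ γ := γ.up_left_mem le_rfl (Nat.zero_le _) hmemij
        rw [hcross] at this
        omega
      have := h2 i j hj hi hi0 ((hout i j hj hi).mp hmemij)
      rw [key i j hj hi hmemij] at this
      exact fun hc => this (by exact_mod_cast hc)
    rcases lt_or_ge i k with hik | hik
    · rcases lt_or_ge j k with hjk | hjk
      · -- inside Durfee square
        rw [hsq i j hik hjk]
        rcases le_or_gt j i with hji | hij
        · exact h1 i j hji hik
        · rw [Nat.add_comm]
          exact h1 j i hij.le hjk
      · -- i < k ≤ j : use symmetry
        have hsym : (j, i) ∈ γ := by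
          rw [← hsc, YoungDiagram.mem_transpose] at hc
          exact hc
        have heq : hookLen γ i j = hookLen γ j i := by
          rw [hookLen, hookLen, hcol, hcol]
          omega
        rw [heq]
        exact houtside j i hik hjk hsym
    · rcases lt_or_ge j k with hjk | hjk
      · exact houtside i j hjk hik hc
      · exfalso
        have : (k, k) ∈ γ := γ.up_left_mem hik hjk hc
        rw [hdiag] at this
        omega
end

section
/- There exists a self-conjugate 3-core partition of n if and only if n = r(3r+2) or n = r(3r−2) for some integer r ≥ 1 (equivalently n = r(3r±2)); moreover when it exists, the self-conjugate 3-core partition of n is unique. -/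
namespace YoungDiagram

lemma rowLen_eq_of_forall_mem_iff {μ : YoungDiagram} {i k : ℕ}
    (h : ∀ j, (i, j) ∈ μ ↔ j < k) : μ.rowLen i = k :=
  eq_of_forall_lt_iff fun j => by rw [← mem_iff_lt_rowLen, h]

noncomputable def dropPrincipalHook (μ : YoungDiagram) : YoungDiagram where
  cells := μ.cells.preimage (· + (1, 1)) (add_left_injective _).injOn
  isLowerSet := by
    intro c d hdc hc
    rw [Finset.mem_coe, Finset.mem_preimage] at hc ⊢
    exact μ.isLowerSet (add_le_add_left hdc _) hc

@[simp]
lemma mem_dropPrincipalHook {μ : YoungDiagram} {i j : ℕ} :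
    (i, j) ∈ μ.dropPrincipalHook ↔ (i + 1, j + 1) ∈ μ := by
  rw [← mem_cells, ← mem_cells]
  exact Finset.mem_preimage (hf := (add_left_injective _).injOn)

lemma transpose_dropPrincipalHook (μ : YoungDiagram) :
    μ.dropPrincipalHook.transpose = μ.transpose.dropPrincipalHook := by
  ext ⟨i, j⟩
  simp only [mem_cells, mem_transpose, Prod.swap_prod_mk, mem_dropPrincipalHook]

lemma rowLen_dropPrincipalHook (μ : YoungDiagram) (i : ℕ) :
    μ.dropPrincipalHook.rowLen i = μ.rowLen (i + 1) - 1 :=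
  rowLen_eq_of_forall_mem_iff fun j => by rw [mem_dropPrincipalHook, mem_iff_lt_rowLen]; omega

lemma colLen_dropPrincipalHook (μ : YoungDiagram) (j : ℕ) :
    μ.dropPrincipalHook.colLen j = μ.colLen (j + 1) - 1 := by
  rw [← rowLen_transpose, transpose_dropPrincipalHook, rowLen_dropPrincipalHook, rowLen_transpose]

lemma hookLen_dropPrincipalHook {μ : YoungDiagram} {i j : ℕ}
    (h : (i, j) ∈ μ.dropPrincipalHook) :
    hookLen μ.dropPrincipalHook i j = hookLen μ (i + 1) (j + 1) := by
  rw [mem_dropPrincipalHook] at h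
  have hrow := mem_iff_lt_rowLen.1 h
  have hcol := mem_iff_lt_colLen.1 h
  rw [hookLen, hookLen, rowLen_dropPrincipalHook, colLen_dropPrincipalHook]
  omega

lemma isTCore_dropPrincipalHook {μ : YoungDiagram} {t : ℕ} (h : IsTCore μ t) :
    IsTCore μ.dropPrincipalHook t := by
  rintro ⟨i, j⟩ hc
  rw [mem_cells] at hc
  rw [hookLen_dropPrincipalHook hc]
  exact h _ ((mem_cells _).2 (mem_dropPrincipalHook.1 hc))

lemma hookLen_zero_succ {μ : YoungDiagram} {j : ℕ} (h : (0, j + 1) ∈ μ) :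
    hookLen μ 0 (j + 1) = μ.rowLen 0 + μ.dropPrincipalHook.colLen j - (j + 1) := by
  have hrow := mem_iff_lt_rowLen.1 h
  have hcol := mem_iff_lt_colLen.1 h
  rw [hookLen, colLen_dropPrincipalHook]
  omega

lemma card_eq_card_dropPrincipalHook_add {μ : YoungDiagram} (h : (0, 0) ∈ μ) :
    μ.cells.card = μ.dropPrincipalHook.cells.card + hookLen μ 0 0 := by
  classical
  have hdrop : μ.dropPrincipalHook.cells.card =
      (μ.cells.filter fun c => ¬ (c.1 = 0 ∨ c.2 = 0)).card := by
    rw [dropPrincipalHook, Finset.card_preimage]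
    congr 1
    refine Finset.filter_congr fun c _ => ⟨?_, fun hc => ⟨(c.1 - 1, c.2 - 1), ?_⟩⟩
    · rintro ⟨d, rfl⟩
      simp
    · ext <;> simp only [Prod.mk_add_mk] <;> omega
  have hcorner : μ.row 0 ∩ μ.col 0 = {(0, 0)} := by
    ext ⟨i, j⟩
    simp only [Finset.mem_inter, mem_row_iff, mem_col_iff, Finset.mem_singleton, Prod.mk.injEq]
    constructor
    · rintro ⟨⟨-, hi⟩, -, hj⟩; exact ⟨hi, hj⟩
    · rintro ⟨rfl, rfl⟩; exact ⟨⟨h, rfl⟩, h, rfl⟩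
  have hhook : (μ.cells.filter fun c => c.1 = 0 ∨ c.2 = 0) = μ.row 0 ∪ μ.col 0 := by
    rw [Finset.filter_or]; rfl
  have := Finset.card_union_add_card_inter (μ.row 0) (μ.col 0)
  rw [hcorner, ← hhook, ← rowLen_eq_card, ← colLen_eq_card, Finset.card_singleton] at this
  rw [hdrop, hookLen,
    ← Finset.card_filter_add_card_filter_not (fun c : ℕ × ℕ => c.1 = 0 ∨ c.2 = 0)]
  omega

lemma eq_of_dropPrincipalHook_eq {μ ν : YoungDiagram} (hrow : μ.rowLen 0 = ν.rowLen 0)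
    (hcol : μ.colLen 0 = ν.colLen 0) (hdrop : μ.dropPrincipalHook = ν.dropPrincipalHook) :
    μ = ν := by
  ext ⟨i, j⟩
  simp only [mem_cells]
  rcases i with _ | i
  · rw [mem_iff_lt_rowLen, mem_iff_lt_rowLen, hrow]
  rcases j with _ | j
  · rw [mem_iff_lt_colLen, mem_iff_lt_colLen, hcol]
  rw [← mem_dropPrincipalHook, ← mem_dropPrincipalHook, hdrop]

def sc3CoreRowLen (m i : ℕ) : ℕ :=
  if 3 * i < m then m - 2 * i else (m - i + 1) / 2

def sc3Core (m : ℕ) : YoungDiagram where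
  cells := (Finset.range m ×ˢ Finset.range m).filter fun c => 2 * min c.1 c.2 + max c.1 c.2 < m
  isLowerSet := by
    rintro ⟨i, j⟩ ⟨k, l⟩ ⟨hki, hlj⟩ h
    simp only [Finset.coe_filter, Finset.mem_product, Finset.mem_range, Set.mem_ofPred_eq] at h ⊢
    have := min_le_min hki hlj
    have := max_le_max hki hlj
    omega

lemma mem_sc3Core {m i j : ℕ} : (i, j) ∈ sc3Core m ↔ 2 * min i j + max i j < m := by
  rw [← mem_cells]
  simp only [sc3Core, Finset.mem_filter, Finset.mem_product, Finset.mem_range,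
    and_iff_right_iff_imp]
  omega

lemma transpose_sc3Core (m : ℕ) : (sc3Core m).transpose = sc3Core m := by
  ext ⟨i, j⟩
  simp only [mem_cells, mem_transpose, Prod.swap_prod_mk, mem_sc3Core, min_comm, max_comm]

lemma rowLen_sc3Core (m i : ℕ) : (sc3Core m).rowLen i = sc3CoreRowLen m i :=
  rowLen_eq_of_forall_mem_iff fun j => by
    rw [mem_sc3Core, sc3CoreRowLen]
    split_ifs <;> omega

lemma colLen_sc3Core (m j : ℕ) : (sc3Core m).colLen j = sc3CoreRowLen m j := by
  rw [← rowLen_transpose, transpose_sc3Core, rowLen_sc3Core]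

lemma isTCore_sc3Core {m : ℕ} (hm : m % 3 ≠ 2) : IsTCore (sc3Core m) 3 := by
  rintro ⟨i, j⟩ h
  rw [mem_cells, mem_sc3Core] at h
  simp only [hookLen, rowLen_sc3Core, colLen_sc3Core, sc3CoreRowLen]
  split_ifs <;> omega

lemma dropPrincipalHook_sc3Core (m : ℕ) : (sc3Core m).dropPrincipalHook = sc3Core (m - 3) := by
  ext ⟨i, j⟩
  simp only [mem_cells, mem_dropPrincipalHook, mem_sc3Core]
  omega

lemma card_sc3Core_add_three (m : ℕ) :
    (sc3Core (m + 3)).cells.card = (sc3Core m).cells.card + (2 * m + 5) := by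
  rw [card_eq_card_dropPrincipalHook_add (mem_sc3Core.2 (by omega)), dropPrincipalHook_sc3Core,
    Nat.add_sub_cancel, hookLen, rowLen_sc3Core, colLen_sc3Core, sc3CoreRowLen, if_pos (by omega)]
  omega

lemma card_sc3Core_three_mul (r : ℕ) : (sc3Core (3 * r)).cells.card = r * (3 * r + 2) := by
  induction r with
  | zero => rfl
  | succ r ih =>
    rw [mul_add_one, card_sc3Core_add_three, ih]
    ring

lemma card_sc3Core_three_mul_sub_two {r : ℕ} (hr : 1 ≤ r) :
    (sc3Core (3 * r - 2)).cells.card = r * (3 * r - 2) := by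
  induction r, hr using Nat.le_induction with
  | base => rfl
  | succ r hr ih =>
    rw [show 3 * (r + 1) - 2 = 3 * r - 2 + 3 by omega, card_sc3Core_add_three, ih]
    zify [hr, show 2 ≤ 3 * r by omega]
    ring

lemma strictMono_card_sc3Core : StrictMono fun m => (sc3Core m).cells.card :=
  strictMono_nat_of_lt_succ fun m => by
    refine Finset.card_lt_card ((Finset.ssubset_iff_of_subset ?_).2 ⟨(0, m), ?_, ?_⟩)
    · rintro ⟨i, j⟩
      simp only [mem_cells, mem_sc3Core]
      omega
    all_goals simp [mem_sc3Core]

lemma sc3CoreRowLen_zero (m : ℕ) : sc3CoreRowLen m 0 = m := by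
  unfold sc3CoreRowLen
  split_ifs <;> omega

lemma sub_three_eq_of_forall_not_three_dvd {p a : ℕ} (hp : p % 3 ≠ 2) (ha : a % 3 ≠ 2)
    (hpa : p < a) (hhook : ∀ j, j + 1 < a → ¬ 3 ∣ a + sc3CoreRowLen p j - (j + 1)) :
    a - 3 = p := by
  -- each excluded value of `a` produces a first-row hook of length exactly 3
  have hne3 : ∀ j, j + 1 < a → a + sc3CoreRowLen p j - (j + 1) ≠ 3 :=
    fun j hj h => hhook j hj (by rw [h])
  have hle : a ≤ p + 3 := by
    by_contra! h
    exact hne3 (a - 4) (by omega) (by unfold sc3CoreRowLen; split_ifs <;> omega)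
  rcases Nat.eq_zero_or_pos p with rfl | hp0
  · omega
  have hne2 : a ≠ p + 2 := fun h =>
    hne3 (p - 1) (by omega) (by unfold sc3CoreRowLen; split_ifs <;> omega)
  have hne1 : a ≠ p + 1 := fun h => by
    obtain rfl | hp3 : p = 1 ∨ 3 ≤ p := by omega
    · omega
    · exact hne3 (p - 2) (by omega) (by unfold sc3CoreRowLen; split_ifs <;> omega)
  omega

theorem exists_eq_sc3Core {μ : YoungDiagram} (hsc : μ.transpose = μ) (hcore : IsTCore μ 3) :
    ∃ m, m % 3 ≠ 2 ∧ μ = sc3Core m := by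
  induction hcard : μ.cells.card using Nat.strong_induction_on generalizing μ with
  | _ N ih =>
  by_cases h00 : (0, 0) ∉ μ
  · refine ⟨0, by omega, ?_⟩
    ext ⟨i, j⟩
    simp only [mem_cells, mem_sc3Core, Nat.not_lt_zero, iff_false]
    exact fun h => h00 (μ.up_left_mem (Nat.zero_le i) (Nat.zero_le j) h)
  push Not at h00
  set a := μ.rowLen 0
  have hcol : μ.colLen 0 = a := by rw [← rowLen_transpose, hsc]
  have hpos : 0 < a := mem_iff_lt_rowLen.1 h00
  have hcorner : hookLen μ 0 0 = 2 * a - 1 := by rw [hookLen, hcol]; omega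
  obtain ⟨p, hp, hdrop⟩ := ih _ (by have := card_eq_card_dropPrincipalHook_add h00; omega)
    (by rw [transpose_dropPrincipalHook, hsc]) (isTCore_dropPrincipalHook hcore) rfl
  have ha : a % 3 ≠ 2 := fun h => hcore (0, 0) ((mem_cells _).2 h00) (by rw [hcorner]; omega)
  have hpa : p < a := by
    have h1 := rowLen_dropPrincipalHook μ 0
    rw [hdrop, rowLen_sc3Core, sc3CoreRowLen_zero, zero_add] at h1
    have h2 : μ.rowLen 1 ≤ a := μ.rowLen_anti 0 1 zero_le_one
    omega
  have hhook : ∀ j, j + 1 < a → ¬ 3 ∣ a + sc3CoreRowLen p j - (j + 1) := fun j hj => by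
    have hmem : (0, j + 1) ∈ μ := mem_iff_lt_rowLen.2 hj
    simpa only [hookLen_zero_succ hmem, hdrop, colLen_sc3Core] using
      hcore _ ((mem_cells _).2 hmem)
  refine ⟨a, ha, eq_of_dropPrincipalHook_eq ?_ ?_ ?_⟩
  · rw [rowLen_sc3Core, sc3CoreRowLen_zero]
  · rw [hcol, colLen_sc3Core, sc3CoreRowLen_zero]
  · rw [hdrop, dropPrincipalHook_sc3Core, sub_three_eq_of_forall_not_three_dvd hp ha hpa hhook]

lemma exists_card_sc3Core_eq_iff {n : ℕ} (hn : 0 < n) :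
    (∃ m, m % 3 ≠ 2 ∧ (sc3Core m).cells.card = n) ↔
      ∃ r, 1 ≤ r ∧ (n = r * (3 * r + 2) ∨ n = r * (3 * r - 2)) := by
  constructor
  · rintro ⟨m, hm, rfl⟩
    rcases (by omega : m % 3 = 0 ∨ m % 3 = 1) with hm0 | hm1
    · obtain ⟨r, rfl⟩ : ∃ r, m = 3 * r := ⟨m / 3, by omega⟩
      rw [card_sc3Core_three_mul] at hn ⊢
      exact ⟨r, Nat.pos_of_ne_zero (by rintro rfl; simp at hn), Or.inl rfl⟩
    · obtain ⟨r, hr, rfl⟩ : ∃ r, 1 ≤ r ∧ m = 3 * r - 2 :=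
        ⟨m / 3 + 1, by omega, by omega⟩
      exact ⟨r, hr, Or.inr (card_sc3Core_three_mul_sub_two hr)⟩
  · rintro ⟨r, hr, rfl | rfl⟩
    · exact ⟨3 * r, by omega, card_sc3Core_three_mul r⟩
    · exact ⟨3 * r - 2, by omega, card_sc3Core_three_mul_sub_two hr⟩

theorem exists_card_eq_iff_exists_sc3Core {n : ℕ} :
    (∃ γ : YoungDiagram, γ.cells.card = n ∧ γ.transpose = γ ∧ IsTCore γ 3) ↔
      ∃ m, m % 3 ≠ 2 ∧ (sc3Core m).cells.card = n := by
  constructor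
  · rintro ⟨γ, rfl, hsc, hcore⟩
    obtain ⟨m, hm, rfl⟩ := exists_eq_sc3Core hsc hcore
    exact ⟨m, hm, rfl⟩
  · rintro ⟨m, hm, rfl⟩
    exact ⟨sc3Core m, rfl, transpose_sc3Core m, isTCore_sc3Core hm⟩

end YoungDiagram

theorem stmt10 (n : ℕ) (hn : 0 < n) :
    ((∃ γ : YoungDiagram, γ.cells.card = n ∧ γ.transpose = γ ∧ IsTCore γ 3) ↔
      ∃ r : ℕ, 1 ≤ r ∧ (n = r * (3 * r + 2) ∨ n = r * (3 * r - 2))) ∧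
    (∀ γ₁ γ₂ : YoungDiagram,
      (γ₁.cells.card = n ∧ γ₁.transpose = γ₁ ∧ IsTCore γ₁ 3) →
      (γ₂.cells.card = n ∧ γ₂.transpose = γ₂ ∧ IsTCore γ₂ 3) → γ₁ = γ₂) := by
  open YoungDiagram in
  refine ⟨exists_card_eq_iff_exists_sc3Core.trans (exists_card_sc3Core_eq_iff hn), ?_⟩
  rintro γ₁ γ₂ ⟨h₁, hsc₁, hcore₁⟩ ⟨h₂, hsc₂, hcore₂⟩
  obtain ⟨m₁, -, rfl⟩ := exists_eq_sc3Core hsc₁ hcore₁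
  obtain ⟨m₂, -, rfl⟩ := exists_eq_sc3Core hsc₂ hcore₂
  rw [strictMono_card_sc3Core.injective (h₁.trans h₂.symm)]
end

section
/- For r ≥ 1, the partition with parts ⟨1², 2², …, (r−1)², r, r+2, r+4, …, 3r−4, 3r−2⟩ (i.e., each of 1,…,r−1 with multiplicity 2, then single parts r, r+2, …, 3r−2) is a self-conjugate 3-core partition of size r(3r−2). -/
private lemma sum_half (f : ℕ → ℕ) : ∀ n, ∑ k ∈ Finset.range (2 * n), f (k / 2)
    = 2 * ∑ m ∈ Finset.range n, f m := by
  intro n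
  induction n with
  | zero => simp
  | succ n ih =>
    have : 2 * (n + 1) = (2 * n) + 1 + 1 := by ring
    rw [this, Finset.sum_range_succ, Finset.sum_range_succ, ih, Finset.sum_range_succ]
    have h1 : (2 * n) / 2 = n := by omega
    have h2 : (2 * n + 1) / 2 = n := by omega
    rw [h1, h2]; ring

theorem stmt11 (r : ℕ) (hr : 1 ≤ r) (γ : YoungDiagram)
    (h : ∀ i, γ.rowLen i = if i < r then 3 * r - 2 - 2 * i else r - 1 - (i - r) / 2) :
    γ.cells.card = r * (3 * r - 2) ∧ γ.transpose = γ ∧ IsTCore γ 3 := by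
  set f : ℕ → ℕ := fun i => if i < r then 3 * r - 2 - 2 * i else r - 1 - (i - r) / 2 with hf
  have hmem : ∀ i j : ℕ, (i, j) ∈ γ ↔ j < f i := by
    intro i j
    rw [YoungDiagram.mem_iff_lt_rowLen, h i]
  have hsym : ∀ i j : ℕ, j < f i ↔ i < f j := by
    intro i j
    simp only [hf]
    split_ifs <;> omega
  have htr : γ.transpose = γ := by
    ext ⟨i, j⟩
    simp only [YoungDiagram.mem_cells, YoungDiagram.mem_transpose, Prod.swap]
    rw [hmem, hmem, hsym]
  have hcol : ∀ j, γ.colLen j = f j := by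
    intro j
    rw [← YoungDiagram.rowLen_transpose, htr, h j]
  refine ⟨?_, htr, ?_⟩
  · -- cardinality
    have hcells : γ.cells =
        (Finset.range (3 * r)).biUnion (fun i => {i} ×ˢ Finset.range (f i)) := by
      ext ⟨i, j⟩
      simp only [YoungDiagram.mem_cells, Finset.mem_biUnion, Finset.mem_range,
        Finset.mem_product, Finset.mem_singleton, hmem]
      constructor
      · intro hij
        refine ⟨i, ?_, rfl, hij⟩
        by_contra hi
        simp only [hf] at hij
        split_ifs at hij <;> omega
      · rintro ⟨a, _, rfl, hj⟩; exact hj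
    rw [hcells, Finset.card_biUnion]
    · have hterm : ∀ i, ({i} ×ˢ Finset.range (f i)).card = f i := by
        intro i; simp
      rw [Finset.sum_congr rfl fun i _ => hterm i]
      have e1 : ∑ i ∈ Finset.range r, f i = ∑ i ∈ Finset.range r, (r + 2 * (r - 1 - i)) := by
        refine Finset.sum_congr rfl fun i hi => ?_
        simp only [Finset.mem_range] at hi
        simp only [hf, if_pos hi]
        omega
      have e2 : ∑ i ∈ Finset.Ico r (3 * r), f i
          = ∑ k ∈ Finset.range (2 * r), (r - 1 - k / 2) := by
        rw [Finset.sum_Ico_eq_sum_range]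
        have h3 : 3 * r - r = 2 * r := by omega
        rw [h3]
        refine Finset.sum_congr rfl fun k _ => ?_
        simp only [hf]
        rw [if_neg (by omega)]
        congr 1
        omega
      have key : ∑ i ∈ Finset.range (3 * r), f i = r * (3 * r - 2) := by
        rw [Finset.range_eq_Ico,
          ← Finset.sum_Ico_consecutive _ (Nat.zero_le r) (by omega : r ≤ 3 * r),
          ← Finset.range_eq_Ico, e1, e2, sum_half (fun m => r - 1 - m) r]
        have grefl : ∑ i ∈ Finset.range r, (r - 1 - i) = ∑ i ∈ Finset.range r, i := by
          exact Finset.sum_range_reflect (fun i => i) r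
        rw [Finset.sum_add_distrib, Finset.sum_const, ← Finset.mul_sum, grefl]
        have gauss : (∑ i ∈ Finset.range r, i) * 2 = r * (r - 1) := Finset.sum_range_id_mul_two r
        obtain ⟨s, rfl⟩ : ∃ s, r = s + 1 := ⟨r - 1, by omega⟩
        have h1 : 3 * (s + 1) - 2 = 3 * s + 1 := by omega
        have h2 : (s + 1) - 1 = s := by omega
        rw [h2] at gauss
        simp only [smul_eq_mul, Finset.card_range, h1]
        nlinarith [gauss]
      exact key
    · intro a _ b _ hab
      simp only [Finset.disjoint_left]
      rintro ⟨x, y⟩ hx hy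
      simp only [Finset.mem_product, Finset.mem_singleton] at hx hy
      exact hab (hx.1 ▸ hy.1 ▸ rfl)
  · -- 3-core
    rintro ⟨i, j⟩ hc
    rw [YoungDiagram.mem_cells, hmem] at hc
    have hc' : i < f j := (hsym i j).mp hc
    simp only [hookLen, h i, hcol j]
    simp only [hf] at hc hc' ⊢
    split_ifs at hc hc' ⊢ <;> omega
end

section
/- For r ≥ 1, the partition with parts ⟨1², 2², …, (r−1)², r², r+2, r+4, …, 3r−2, 3r⟩ (each of 1,…,r with multiplicity 2, then single parts r+2, r+4, …, 3r) is a self-conjugate 3-core partition of size r(3r+2). -/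
lemma sumA (r : ℕ) : ∀ n, n ≤ r →
    (∑ i ∈ Finset.range n, (3 * r - 2 * i)) + n * n = n * (3 * r + 1) := by
  intro n
  induction n with
  | zero => intro _; simp
  | succ n ih =>
    intro hn
    have h1 := ih (by omega)
    rw [Finset.sum_range_succ]
    have h2 : 2 * n ≤ 3 * r := by omega
    zify [h2] at h1 ⊢
    linear_combination h1

lemma sumB (r : ℕ) : ∀ n, n ≤ r →
    (∑ s ∈ Finset.range (2 * n), (r - s / 2)) + n * n = n * (2 * r + 1) := by
  intro n
  induction n with
  | zero => intro _; simp
  | succ n ih =>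
    intro hn
    have h1 := ih (by omega)
    rw [show 2 * (n + 1) = 2 * n + 1 + 1 by ring, Finset.sum_range_succ,
      Finset.sum_range_succ]
    have e1 : (2 * n) / 2 = n := by omega
    have e2 : (2 * n + 1) / 2 = n := by omega
    rw [e1, e2]
    have h3 : n ≤ r := by omega
    zify [h3] at h1 ⊢
    linear_combination h1

theorem stmt12 (r : ℕ) (hr : 1 ≤ r) (γ : YoungDiagram)
    (h : ∀ i, γ.rowLen i = if i < r then 3 * r - 2 * i else r - (i - r) / 2) :
    γ.cells.card = r * (3 * r + 2) ∧ γ.transpose = γ ∧ IsTCore γ 3 := by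
  set f : ℕ → ℕ := fun i => if i < r then 3 * r - 2 * i else r - (i - r) / 2 with hf
  have hmem : ∀ i j : ℕ, (i, j) ∈ γ ↔ j < f i := fun i j => by
    rw [YoungDiagram.mem_iff_lt_rowLen, h i]
  have hsym : ∀ i j : ℕ, j < f i ↔ i < f j := by
    intro i j
    simp only [hf]
    split_ifs <;> omega
  have htr : γ.transpose = γ := by
    ext ⟨i, j⟩
    rw [YoungDiagram.mem_cells, YoungDiagram.mem_cells, YoungDiagram.mem_transpose]
    simp only [Prod.swap_prod_mk]
    rw [hmem, hmem, hsym]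
  have hcol : ∀ j, γ.colLen j = γ.rowLen j := fun j => by
    rw [← YoungDiagram.rowLen_transpose, htr]
  have hzero : ∀ i, 3 * r ≤ i → f i = 0 := by
    intro i hi
    simp only [hf]
    split_ifs <;> omega
  have hcells : γ.cells = (Finset.range (3 * r)).biUnion γ.row := by
    ext ⟨i, j⟩
    simp only [Finset.mem_biUnion, Finset.mem_range, YoungDiagram.mem_cells,
      YoungDiagram.mem_row_iff]
    constructor
    · intro hc
      refine ⟨i, ?_, hc, rfl⟩
      by_contra hlt
      push_neg at hlt
      rw [hmem] at hc
      have := hzero i hlt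
      omega
    · rintro ⟨i', _, hc, rfl⟩
      exact hc
  have hdisj : ∀ x ∈ Finset.range (3 * r), ∀ y ∈ Finset.range (3 * r), x ≠ y →
      Disjoint (γ.row x) (γ.row y) := by
    intro x _ y _ hxy
    rw [Finset.disjoint_left]
    intro c hcx hcy
    rw [YoungDiagram.mem_row_iff] at hcx hcy
    exact hxy (hcx.2 ▸ hcy.2)
  have hcard : γ.cells.card = r * (3 * r + 2) := by
    rw [hcells, Finset.card_biUnion hdisj]
    have hrow : ∀ i ∈ Finset.range (3 * r), (γ.row i).card = f i := by
      intro i _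
      rw [← YoungDiagram.rowLen_eq_card, h i]
    rw [Finset.sum_congr rfl hrow]
    rw [show 3 * r = r + 2 * r by ring, Finset.sum_range_add]
    have e1 : ∀ i ∈ Finset.range r, f i = 3 * r - 2 * i := by
      intro i hi
      rw [Finset.mem_range] at hi
      simp only [hf, if_pos hi]
    have e2 : ∀ i ∈ Finset.range (2 * r), f (r + i) = r - i / 2 := by
      intro i _
      simp only [hf, if_neg (by omega : ¬ r + i < r), Nat.add_sub_cancel_left]
    rw [Finset.sum_congr rfl e1, Finset.sum_congr rfl e2]
    have a := sumA r r le_rfl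
    have b := sumB r r le_rfl
    zify at a b ⊢
    linear_combination a + b
  refine ⟨hcard, htr, ?_⟩
  intro c hc
  obtain ⟨i, j⟩ := c
  rw [YoungDiagram.mem_cells] at hc
  have h1 : j < f i := (hmem i j).1 hc
  have h2 : i < f j := (hsym i j).1 h1
  unfold hookLen
  rw [hcol, h i, h j]
  simp only [hf] at h1 h2 ⊢
  split_ifs at h1 h2 ⊢ <;> omega
end

section
/- If n ≡ 7 (mod 8) then there are no self-conjugate 7-core partitions of n. -/
/-!
Encode a partition of `n` with `ℓ` rows by the set `B` of hook lengths of its first column, so that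
`2 * ∑ B + ℓ = 2 * n + ℓ ^ 2`. Being a `7`-core means that `B` is closed under `b ↦ b - 7`: on each
runner `r : ZMod 7` of the `7`-abacus, `B` is an initial progression `r, r + 7, …` of some length
`m r`. Being self-conjugate means that `B` and its reflection `N - B`, for `N` the largest hook,
partition `{0, …, N}`; this pairs runner `r` with runner `N - r`.

Completing the square in the formula for `∑ B` gives `∑ r, w r ^ 2 = 14 * n + 28` for the weights
`w r = 7 * m r + r - ℓ - 3`, and the pairing gives `w (N - r) = -w r`, so `∑ r, w r ^ 2` is twice a
sum of three squares. Hence `7 * (n + 2)` is a sum of three squares, which is impossible when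
`n ≡ 7 [MOD 8]`.
-/

open Finset

theorem two_mul_sum_range_add_mul (a d m : ℕ) :
    2 * ∑ k ∈ range m, (a + d * k) + d * m = m * (2 * a + d * m) := by
  induction m with
  | zero => simp
  | succ m ih => rw [sum_range_succ]; linear_combination ih

namespace Abacus

variable {t : ℕ} {B : Finset ℕ}

def runnerCount (t : ℕ) (B : Finset ℕ) (r : ZMod t) : ℕ := #(B.filter fun b : ℕ => (b : ZMod t) = r)

theorem add_mul_mem_of_le (hB : ∀ b ∈ B, t ≤ b → b - t ∈ B) {a j k : ℕ}
    (hk : a + t * k ∈ B) (hjk : j ≤ k) : a + t * j ∈ B := by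
  induction k with
  | zero => rwa [Nat.le_zero.mp hjk]
  | succ k ih =>
    rcases hjk.eq_or_lt with rfl | hlt
    · exact hk
    · refine ih ?_ (Nat.le_of_lt_succ hlt)
      have := hB _ hk (by rw [mul_add_one]; omega)
      rwa [mul_add_one, ← add_assoc, Nat.add_sub_cancel] at this

section

variable [NeZero t]

theorem mem_iff_div_lt_runnerCount (hB : ∀ b ∈ B, t ≤ b → b - t ∈ B) (b : ℕ) :
    b ∈ B ↔ b / t < runnerCount t B b := by
  have hinj : Function.Injective (fun k => b % t + t * k) := fun k l hkl => by
    simpa [NeZero.ne t] using hkl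
  have hb : b % t + t * (b / t) = b := Nat.mod_add_div b t
  constructor
  · intro hmem
    have hsub : (range (b / t + 1)).image (fun k => b % t + t * k) ⊆
        B.filter fun c : ℕ => (c : ZMod t) = b := by
      intro c hc
      obtain ⟨k, hk, rfl⟩ := mem_image.mp hc
      refine mem_filter.mpr ⟨add_mul_mem_of_le hB (hb.symm ▸ hmem) (Nat.lt_succ_iff.mp
        (mem_range.mp hk)), ?_⟩
      rw [ZMod.natCast_eq_natCast_iff', Nat.add_mul_mod_self_left, Nat.mod_mod]
    simpa [card_image_of_injective _ hinj, runnerCount] using card_le_card hsub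
  · contrapose!
    intro hnot
    have hsub : (B.filter fun c : ℕ => (c : ZMod t) = b) ⊆
        (range (b / t)).image (fun k => b % t + t * k) := by
      intro c hc
      obtain ⟨hcB, hcb⟩ := mem_filter.mp hc
      have hc' : b % t + t * (c / t) = c :=
        (ZMod.natCast_eq_natCast_iff' c b t).mp hcb ▸ Nat.mod_add_div c t
      refine mem_image.mpr ⟨c / t, mem_range.mpr ?_, hc'⟩
      by_contra! hle
      exact hnot (hb ▸ add_mul_mem_of_le hB (hc'.symm ▸ hcB) hle)
    simpa [card_image_of_injective _ hinj, runnerCount] using card_le_card hsub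

theorem filter_natCast_eq_eq_image (hB : ∀ b ∈ B, t ≤ b → b - t ∈ B) (r : ZMod t) :
    (B.filter fun b : ℕ => (b : ZMod t) = r) =
      (range (runnerCount t B r)).image (fun k => r.val + t * k) := by
  ext c
  simp only [mem_filter, mem_image, mem_range]
  constructor
  · rintro ⟨hc, rfl⟩
    refine ⟨c / t, (mem_iff_div_lt_runnerCount hB c).mp hc, ?_⟩
    rw [ZMod.val_natCast, Nat.mod_add_div]
  · rintro ⟨k, hk, rfl⟩
    have hr : ((r.val + t * k : ℕ) : ZMod t) = r := by simp
    refine ⟨?_, hr⟩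
    rwa [mem_iff_div_lt_runnerCount hB, hr, Nat.add_mul_div_left _ _ (Nat.pos_of_neZero t),
      Nat.div_eq_of_lt (ZMod.val_lt r), zero_add]

theorem card_eq_sum_runnerCount : #B = ∑ r, runnerCount t B r :=
  card_eq_sum_card_fiberwise fun _ _ => mem_univ (_ : ZMod t)

theorem two_mul_sum_add_mul_card (hB : ∀ b ∈ B, t ≤ b → b - t ∈ B) :
    2 * ∑ b ∈ B, b + t * #B = ∑ r, runnerCount t B r * (2 * r.val + t * runnerCount t B r) := by
  rw [card_eq_sum_runnerCount (t := t), ← sum_fiberwise B (fun b : ℕ => (b : ZMod t)) (fun b => b),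
    mul_sum, mul_sum, ← sum_add_distrib]
  refine sum_congr rfl fun r _ => ?_
  rw [filter_natCast_eq_eq_image hB, sum_image fun k _ l _ hkl => by simpa [NeZero.ne t] using hkl]
  exact two_mul_sum_range_add_mul _ _ _

theorem mul_runnerCount_range_add (N : ℕ) (r : ZMod t) :
    t * runnerCount t (range (N + 1)) r + r.val + ((N : ZMod t) - r).val = N + t := by
  set v := ((N : ZMod t) - r).val with hv
  have hvt : v < t := ZMod.val_lt _
  have ht : 0 < t := Nat.pos_of_neZero t
  have hclosed : ∀ b ∈ range (N + 1), t ≤ b → b - t ∈ range (N + 1) := fun b hb _ => by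
    simp only [mem_range] at hb ⊢; omega
  -- `N + t - v` is the first element of runner `r` beyond `N`.
  have hy : ((N + t - v : ℕ) : ZMod t) = r := by
    rw [Nat.cast_sub (by omega), hv, ZMod.natCast_zmod_val]; simp
  have hle : runnerCount t (range (N + 1)) r ≤ (N + t - v) / t := by
    have := (mem_iff_div_lt_runnerCount hclosed (N + t - v)).not.mp
      (by simp only [mem_range]; omega)
    rwa [hy, not_lt] at this
  have hge : (N + t - v) / t ≤ runnerCount t (range (N + 1)) r := by
    rcases lt_or_ge N v with h | h
    · simp [Nat.div_eq_of_lt (show N + t - v < t by omega)]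
    · have hNv : N + t - v = N - v + t := by omega
      have hcast : ((N - v : ℕ) : ZMod t) = r := by rw [← hy, hNv]; simp
      have := (mem_iff_div_lt_runnerCount hclosed (N - v)).mp (by simp only [mem_range]; omega)
      rw [hcast] at this
      rw [hNv, Nat.add_div_right _ ht]
      omega
  have hmod : (N + t - v) % t = r.val := by rw [← ZMod.val_natCast, hy]
  have := Nat.mod_add_div (N + t - v) t
  rw [le_antisymm hle hge]
  omega

end

theorem runnerCount_add_runnerCount_sub {N : ℕ} (hsub : ∀ b ∈ B, b ≤ N)
    (hsymm : ∀ x ≤ N, x ∈ B ↔ N - x ∉ B) (r : ZMod t) :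
    runnerCount t B r + runnerCount t B (N - r) = runnerCount t (range (N + 1)) r := by
  rw [runnerCount, runnerCount, runnerCount,
    ← card_filter_add_card_filter_not (s := (range (N + 1)).filter fun x : ℕ => (x : ZMod t) = r)
      (fun x => x ∈ B), filter_filter, filter_filter]
  congr 1
  · congr 1
    ext x
    simp only [mem_filter, mem_range]
    exact ⟨fun ⟨hx, hr⟩ => ⟨Nat.lt_succ_of_le (hsub x hx), hr, hx⟩, fun ⟨_, hr, hx⟩ => ⟨hx, hr⟩⟩
  · refine card_nbij' (N - ·) (N - ·) ?_ ?_ ?_ ?_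
    · intro b hb
      obtain ⟨hbB, hbr⟩ := mem_filter.mp hb
      have hbN := hsub b hbB
      refine mem_filter.mpr ⟨mem_range.mpr (by dsimp only; omega), ?_, ?_⟩
      · rw [Nat.cast_sub hbN, hbr, sub_sub_cancel]
      · rw [hsymm _ (Nat.sub_le N b), Nat.sub_sub_self hbN, not_not]; exact hbB
    · intro x hx
      obtain ⟨hxN, hxr, hxB⟩ := mem_filter.mp hx
      have hxN' : x ≤ N := Nat.lt_succ_iff.mp (mem_range.mp hxN)
      refine mem_filter.mpr ⟨not_not.mp ((hsymm x hxN').not.mp hxB), ?_⟩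
      rw [Nat.cast_sub hxN', hxr]
    · intro b hb
      exact Nat.sub_sub_self (hsub b (mem_filter.mp hb).1)
    · intro x hx
      exact Nat.sub_sub_self (Nat.lt_succ_iff.mp (mem_range.mp (mem_filter.mp hx).1))

theorem two_mul_card_eq_succ {N : ℕ} (hsub : ∀ b ∈ B, b ≤ N)
    (hsymm : ∀ x ≤ N, x ∈ B ↔ N - x ∉ B) : 2 * #B = N + 1 := by
  -- With a single runner the pairing identity reads `#B + #B = N + 1`.
  have hone : ∀ (A : Finset ℕ) (r : ZMod 1), runnerCount 1 A r = #A := fun A r => by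
    simp [runnerCount, Subsingleton.elim _ r]
  have := runnerCount_add_runnerCount_sub hsub hsymm (0 : ZMod 1)
  rw [hone, hone, hone, card_range] at this
  omega

theorem sum_zmod_seven {M : Type*} [AddCommMonoid M] (f : ZMod 7 → M) :
    ∑ r, f r = f 0 + f 1 + f 2 + f 3 + f 4 + f 5 + f 6 :=
  Fin.sum_univ_seven f

def weight (B : Finset ℕ) (r : ZMod 7) : ℤ := 7 * runnerCount 7 B r + r.val - #B - 3

theorem sum_weight_sq {B : Finset ℕ} {n : ℕ} (hB : ∀ b ∈ B, 7 ≤ b → b - 7 ∈ B)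
    (hsum : 2 * ∑ b ∈ B, b + #B = 2 * n + #B ^ 2) :
    ∑ r, weight B r ^ 2 = 14 * n + 28 := by
  have hcount := congrArg (Nat.cast : ℕ → ℤ) (two_mul_sum_add_mul_card hB)
  have hcard := congrArg (Nat.cast : ℕ → ℤ) (card_eq_sum_runnerCount (t := 7) (B := B))
  have hsum' := congrArg (Nat.cast : ℕ → ℤ) hsum
  have hv1 : (1 : ZMod 7).val = 1 := rfl
  simp only [weight, sum_zmod_seven, ZMod.val_zero, hv1, ZMod.val_ofNat] at hcount hcard ⊢
  push_cast at hcount hcard hsum' ⊢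
  norm_num at hcount ⊢
  linear_combination -7 * hcount + 7 * hsum' + 14 * ((#B : ℤ) + 3) * hcard

theorem weight_sub {B : Finset ℕ} {N : ℕ} (hsub : ∀ b ∈ B, b ≤ N)
    (hsymm : ∀ x ≤ N, x ∈ B ↔ N - x ∉ B) (r : ZMod 7) :
    weight B (N - r) = -weight B r := by
  have hpair := runnerCount_add_runnerCount_sub (t := 7) hsub hsymm r
  have hrange := mul_runnerCount_range_add (t := 7) N r
  have hcard := two_mul_card_eq_succ hsub hsymm
  unfold weight
  omega

theorem exists_sum_sq_eq_two_mul_sum_three_sq (f : ZMod 7 → ℤ) (c : ZMod 7)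
    (hf : ∀ r, f (c - r) = -f r) :
    ∃ a b d : ℤ, ∑ r, f r ^ 2 = 2 * (a ^ 2 + b ^ 2 + d ^ 2) := by
  -- `4 * c` is half of `c`, so translating by it turns `r ↦ c - r` into `r ↦ -r`.
  set g : ZMod 7 → ℤ := fun r => f (4 * c + r) with hg
  have h7 : (7 : ZMod 7) = 0 := rfl
  have hodd : ∀ r, g (-r) = -g r := fun r => by
    simp only [hg, ← hf]
    congr 1
    linear_combination c * h7
  have hsum : ∑ r, f r ^ 2 = ∑ r, g r ^ 2 :=
    (Equiv.sum_comp (Equiv.addLeft (4 * c)) (fun r => f r ^ 2)).symm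
  have h0 : g 0 = 0 := by have := hodd 0; rw [neg_zero] at this; linarith
  have h6 : g 6 = -g 1 := hodd 1
  have h5 : g 5 = -g 2 := hodd 2
  have h4 : g 4 = -g 3 := hodd 3
  refine ⟨g 1, g 2, g 3, ?_⟩
  rw [hsum, sum_zmod_seven, h0, h4, h5, h6]
  ring

theorem sq_add_sq_add_sq_emod_eight_ne_seven (a b c : ℤ) : (a ^ 2 + b ^ 2 + c ^ 2) % 8 ≠ 7 := by
  intro h
  have hcast := ZMod.intCast_mod (a ^ 2 + b ^ 2 + c ^ 2) 8
  simp only [Nat.cast_ofNat, h] at hcast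
  push_cast at hcast
  have : ∀ x y z : ZMod 8, x ^ 2 + y ^ 2 + z ^ 2 ≠ 7 := by decide
  exact this a b c hcast.symm

theorem emod_eight_ne_seven_of_symm {B : Finset ℕ} {N n : ℕ} (hB : ∀ b ∈ B, 7 ≤ b → b - 7 ∈ B)
    (hsub : ∀ b ∈ B, b ≤ N) (hsymm : ∀ x ≤ N, x ∈ B ↔ N - x ∉ B)
    (hsum : 2 * ∑ b ∈ B, b + #B = 2 * n + #B ^ 2) : n % 8 ≠ 7 := by
  obtain ⟨a, b, c, habc⟩ :=
    exists_sum_sq_eq_two_mul_sum_three_sq (weight B) N (weight_sub hsub hsymm)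
  rw [sum_weight_sq hB hsum] at habc
  have := sq_add_sq_add_sq_emod_eight_ne_seven a b c
  omega

end Abacus

namespace YoungDiagram

variable (γ : YoungDiagram)

theorem card_cells_eq_sum_rowLen : #γ.cells = ∑ i ∈ range (γ.colLen 0), γ.rowLen i := by
  rw [card_eq_sum_card_fiberwise (f := Prod.fst) fun c hc => mem_range.mpr
    (mem_iff_lt_colLen.mp (γ.up_left_mem le_rfl (Nat.zero_le _) ((mem_cells _).mp hc)))]
  exact sum_congr rfl fun i _ => γ.rowLen_eq_card.symm

variable {γ}

theorem hookLen_zero_add {i : ℕ} (hi : i < γ.colLen 0) :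
    hookLen γ i 0 + i + 1 = γ.rowLen i + γ.colLen 0 := by
  have := mem_iff_lt_rowLen.mp (mem_iff_lt_colLen.mpr hi)
  unfold hookLen
  omega

theorem hookLen_zero_strictAntiOn : StrictAntiOn (hookLen γ · 0) (Set.Iio (γ.colLen 0)) :=
  fun i hi j hj hij => by
    have := hookLen_zero_add hi
    have := hookLen_zero_add hj
    have := γ.rowLen_anti i j hij.le
    dsimp only
    omega

theorem injOn_hookLen_zero : Set.InjOn (hookLen γ · 0) (range (γ.colLen 0)) := by
  simpa only [coe_range] using hookLen_zero_strictAntiOn.injOn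

variable (γ) in
def firstColumnHooks : Finset ℕ := (range (γ.colLen 0)).image (hookLen γ · 0)

theorem card_firstColumnHooks : #γ.firstColumnHooks = γ.colLen 0 := by
  rw [firstColumnHooks, card_image_of_injOn injOn_hookLen_zero, card_range]

theorem two_mul_sum_firstColumnHooks_add :
    2 * ∑ b ∈ γ.firstColumnHooks, b + γ.colLen 0 = 2 * #γ.cells + γ.colLen 0 ^ 2 := by
  have hsum : ∑ i ∈ range (γ.colLen 0), (hookLen γ i 0 + (1 + 1 * i)) =
      #γ.cells + γ.colLen 0 * γ.colLen 0 := by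
    rw [card_cells_eq_sum_rowLen, ← card_range (γ.colLen 0), ← smul_eq_mul, ← sum_const,
      card_range, ← sum_add_distrib]
    refine sum_congr rfl fun i hi => ?_
    have := hookLen_zero_add (mem_range.mp hi)
    omega
  have hgauss := two_mul_sum_range_add_mul 1 1 (γ.colLen 0)
  rw [sum_add_distrib] at hsum
  rw [firstColumnHooks, sum_image injOn_hookLen_zero]
  linarith

theorem le_hookLen_zero_zero {b : ℕ} (hb : b ∈ γ.firstColumnHooks) : b ≤ hookLen γ 0 0 := by
  obtain ⟨i, hi, rfl⟩ := mem_image.mp hb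
  have hi' := mem_range.mp hi
  exact hookLen_zero_strictAntiOn.antitoneOn (lt_of_le_of_lt (Nat.zero_le i) hi') hi'
    (Nat.zero_le i)

-- `colLen 0 + j - colLen j` is `hookLen γ 0 0` minus the hook length of the cell `(0, j)`.
theorem disjoint_firstColumnHooks :
    Disjoint γ.firstColumnHooks
      ((range (γ.rowLen 0)).image fun j => γ.colLen 0 + j - γ.colLen j) := by
  rw [disjoint_left]
  intro b hb hbC
  obtain ⟨j, -, hj⟩ := mem_image.mp hbC
  obtain ⟨i, hi, rfl⟩ := mem_image.mp hb
  have hrow := hookLen_zero_add (mem_range.mp hi)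
  have hcol := γ.colLen_anti 0 j (Nat.zero_le j)
  by_cases hij : j < γ.rowLen i
  · have := mem_iff_lt_colLen.mp (mem_iff_lt_rowLen.mpr hij)
    omega
  · have := mem_iff_lt_colLen.not.mp (mem_iff_lt_rowLen.not.mpr hij)
    omega

theorem injOn_colLen_zero_add_sub_colLen :
    Set.InjOn (fun j => γ.colLen 0 + j - γ.colLen j) (range (γ.rowLen 0)) := fun j _ j' _ h => by
  have := γ.colLen_anti 0 j (Nat.zero_le j)
  have := γ.colLen_anti 0 j' (Nat.zero_le j')
  dsimp only at h
  rcases le_total j j' with hjj | hjj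
  · have := γ.colLen_anti j j' hjj
    omega
  · have := γ.colLen_anti j' j hjj
    omega

theorem firstColumnHooks_union :
    γ.firstColumnHooks ∪ (range (γ.rowLen 0)).image (fun j => γ.colLen 0 + j - γ.colLen j) =
      range (γ.rowLen 0 + γ.colLen 0) := by
  refine eq_of_subset_of_card_le (union_subset ?_ ?_) ?_
  · intro b hb
    have := le_hookLen_zero_zero hb
    obtain ⟨i, hi, -⟩ := mem_image.mp hb
    have := hookLen_zero_add (lt_of_le_of_lt (Nat.zero_le i) (mem_range.mp hi))
    exact mem_range.mpr (by omega)
  · intro x hx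
    obtain ⟨j, hj, rfl⟩ := mem_image.mp hx
    exact mem_range.mpr (by have := mem_range.mp hj; omega)
  · rw [card_union_of_disjoint disjoint_firstColumnHooks, card_firstColumnHooks,
      card_image_of_injOn injOn_colLen_zero_add_sub_colLen, card_range, card_range, add_comm]

theorem sub_mem_firstColumnHooks {t b : ℕ} (hγ : IsTCore γ t) (hb : b ∈ γ.firstColumnHooks)
    (htb : t ≤ b) : b - t ∈ γ.firstColumnHooks := by
  -- Otherwise `b - t = colLen 0 + j - colLen j` for some `j`, and the cell `(i, j)` has hook
  -- length `t`.
  by_contra hnot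
  have hbound := firstColumnHooks_union (γ := γ) ▸ mem_union_left _ hb
  have hC := firstColumnHooks_union (γ := γ) ▸ mem_range.mpr
    (show b - t < γ.rowLen 0 + γ.colLen 0 by have := mem_range.mp hbound; omega)
  obtain ⟨j, -, hj⟩ := mem_image.mp ((mem_union.mp hC).resolve_left hnot)
  obtain ⟨i, hi, rfl⟩ := mem_image.mp hb
  have hrow := hookLen_zero_add (mem_range.mp hi)
  have hcol := γ.colLen_anti 0 j (Nat.zero_le j)
  have hij : i < γ.colLen j := by
    by_contra! h
    have := mem_iff_lt_rowLen.not.mp (mem_iff_lt_colLen.not.mpr h.not_gt)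
    omega
  refine hγ (i, j) ((mem_cells _).mpr (mem_iff_lt_colLen.mpr hij)) ?_
  have : hookLen γ i j = t := by
    unfold hookLen
    omega
  rw [this]

theorem mem_firstColumnHooks_iff_of_transpose_eq (hγ : γ.transpose = γ) (hℓ : 0 < γ.colLen 0)
    {x : ℕ} (hx : x ≤ hookLen γ 0 0) :
    x ∈ γ.firstColumnHooks ↔ hookLen γ 0 0 - x ∉ γ.firstColumnHooks := by
  have hcol : ∀ j, γ.colLen j = γ.rowLen j := fun j => by rw [← γ.colLen_transpose, hγ]
  have h00 := hookLen_zero_add hℓ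
  have hrow0 := hcol 0
  constructor
  · intro hxB hNx
    obtain ⟨i, hi, rfl⟩ := mem_image.mp hxB
    have hi' := mem_range.mp hi
    have hrow := hookLen_zero_add hi'
    have := hcol i
    have := γ.colLen_anti 0 i (Nat.zero_le i)
    refine disjoint_left.mp disjoint_firstColumnHooks hNx
      (mem_image.mpr ⟨i, mem_range.mpr (by omega), ?_⟩)
    omega
  · intro hNx
    have hC := firstColumnHooks_union (γ := γ) ▸ mem_range.mpr
      (show hookLen γ 0 0 - x < γ.rowLen 0 + γ.colLen 0 by omega)
    obtain ⟨j, hj, hjx⟩ := mem_image.mp ((mem_union.mp hC).resolve_left hNx)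
    have hj' : j < γ.colLen 0 := by have := mem_range.mp hj; omega
    have hrow := hookLen_zero_add hj'
    have := hcol j
    have := γ.colLen_anti 0 j (Nat.zero_le j)
    obtain rfl : x = hookLen γ j 0 := by omega
    exact mem_image_of_mem _ (mem_range.mpr hj')

end YoungDiagram

theorem stmt14 (n : ℕ) (h : n % 8 = 7) :
    ¬ ∃ γ : YoungDiagram, γ.cells.card = n ∧ γ.transpose = γ ∧ IsTCore γ 7 := by
  rintro ⟨γ, rfl, hγ, hcore⟩
  have hℓ : 0 < γ.colLen 0 := by
    by_contra! h0
    rw [γ.card_cells_eq_sum_rowLen, Nat.le_zero.mp h0, range_zero, sum_empty] at h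
    contradiction
  refine Abacus.emod_eight_ne_seven_of_symm (fun b hb => γ.sub_mem_firstColumnHooks hcore hb)
    (fun b => γ.le_hookLen_zero_zero) (fun x => γ.mem_firstColumnHooks_iff_of_transpose_eq hγ hℓ)
    ?_ h
  rw [γ.card_firstColumnHooks]
  exact γ.two_mul_sum_firstColumnHooks_add
end
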